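/- For u ∈ ℝ define f_u : ℝ → ℝ by f_u(x) := ∫_0^∞ e^{−e^x cosh w} cos(uw) dw, and for t > 0 and x, y ∈ ℝ define p(t; x, y) := ∫_0^∞ e^{−t u²} f_u(x) f_u(y) · (2/(π |Γ(iu)|²)) du, where Γ is the complex Gamma function. Then the integral defining p converges, p is differentiable in t and twice differentiable in x, and ∂_t p(t; x, y) = ∂_{xx} p(t; x, y) − e^{2x} p(t; x, y) for all t > 0 and x, y ∈ ℝ. -/

import Mathlib

/-!
Write `Mₙ(u, x) = ∫₀^∞ (eˣ cosh w)ⁿ e^{-eˣ cosh w} cos(uw) dw`, so that `f_u(x) = M₀(u, x)`.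
Differentiating under the integral sign gives `∂ₓ Mₙ = n Mₙ - Mₙ₊₁`, and an integration by parts
in `w` gives the Bessel equation `M₂ - M₁ = (e^{2x} - u²) M₀`. By the reflection formula
`2/(π|Γ(iu)|²) = 2u sinh(πu)/π²` grows only exponentially, and `|f_u(x)| ≤ f_0(x)`, so the
Gaussian factor `e^{-tu²}` dominates every integrand in sight, locally uniformly in `t > 0` and
`x`. Hence `p` can be differentiated under the `u`-integral: `∂ₜ` brings down `-u²`, `∂ₓ²` turns
`M₀` into `M₂ - M₁`, and the Bessel equation matches the two.
-/

open MeasureTheory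

/-- `f_u(x) = K_{iu}(e^x) = ∫_0^∞ e^{-e^x cosh w} cos(uw) dw`. -/
noncomputable def besselF (u x : ℝ) : ℝ :=
  ∫ w in Set.Ioi (0 : ℝ), Real.exp (-Real.exp x * Real.cosh w) * Real.cos (u * w)

/-- The spectral heat-kernel integrand
`u ↦ e^{-t u²} f_u(x) f_u(y) · 2/(π |Γ(iu)|²)`. -/
noncomputable def heatKerIntegrand (t x y u : ℝ) : ℝ :=
  Real.exp (-t * u ^ 2) * besselF u x * besselF u y *
    (2 / (Real.pi * ‖Complex.Gamma ((u : ℂ) * Complex.I)‖ ^ 2))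

/-- The heat kernel `p(t;x,y) = ∫_0^∞ e^{-t u²} f_u(x) f_u(y) · 2/(π |Γ(iu)|²) du`
for the operator `ℒf = f'' - e^{2x} f`. -/
noncomputable def heatKer (t x y : ℝ) : ℝ :=
  ∫ u in Set.Ioi (0 : ℝ), heatKerIntegrand t x y u

open Real Set Filter Topology
open scoped Nat

lemma pow_mul_exp_neg_mul_le (n : ℕ) {a s : ℝ} (ha : 0 < a) (hs : 0 ≤ s) :
    s ^ n * exp (-(a * s)) ≤ n ! * (2 / a) ^ n * exp (-(a / 2 * s)) := by
  have hfact := pow_div_factorial_le_exp (a / 2 * s) (by positivity) n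
  rw [div_le_iff₀ (by positivity)] at hfact
  have hs_eq : s ^ n = (2 / a) ^ n * (a / 2 * s) ^ n := by
    rw [← mul_pow]; field_simp
  have hexp : exp (-(a / 2 * s)) = exp (a / 2 * s) * exp (-(a * s)) := by
    rw [← exp_add]; ring_nf
  rw [hs_eq, hexp]
  calc (2 / a) ^ n * (a / 2 * s) ^ n * exp (-(a * s))
      ≤ (2 / a) ^ n * (exp (a / 2 * s) * n !) * exp (-(a * s)) := by gcongr
    _ = _ := by ring

lemma integrableOn_cosh_pow_mul_exp_neg_mul_cosh (n : ℕ) {r : ℝ} (hr : 0 < r) :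
    IntegrableOn (fun w => cosh w ^ n * exp (-(r * cosh w))) (Ioi 0) := by
  refine Integrable.mono' ((exp_neg_integrableOn_Ioi 0 (half_pos hr)).const_mul
    (n ! * (2 / r) ^ n)) (by fun_prop : Continuous _).aestronglyMeasurable ?_
  filter_upwards [self_mem_ae_restrict measurableSet_Ioi] with w hw
  have hw_le : w ≤ cosh w := ((self_le_sinh_iff.2 (le_of_lt hw)).trans (sinh_lt_cosh w).le)
  rw [norm_of_nonneg (by positivity)]
  refine (pow_mul_exp_neg_mul_le n hr (cosh_pos w).le).trans ?_
  gcongr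
  rw [neg_mul]
  exact neg_le_neg (mul_le_mul_of_nonneg_left hw_le (half_pos hr).le)

lemma integrable_exp_mul_abs_mul_exp_neg_mul_sq {t : ℝ} (ht : 0 < t) (K : ℝ) :
    Integrable fun u : ℝ => exp (K * |u|) * exp (-t * u ^ 2) := by
  refine Integrable.mono' ((integrable_exp_neg_mul_sq (half_pos ht)).const_mul
    (exp (K ^ 2 / (2 * t)))) (by fun_prop : Continuous _).aestronglyMeasurable
    (Eventually.of_forall fun u => ?_)
  rw [norm_of_nonneg (by positivity), ← exp_add, ← exp_add]
  refine exp_le_exp.2 ?_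
  rw [← sq_abs u]
  have hsq : 0 ≤ (t * |u| - K) ^ 2 := sq_nonneg _
  field_simp
  nlinarith

noncomputable def besselMoment (n : ℕ) (u x : ℝ) : ℝ :=
  ∫ w in Ioi 0, (exp x * cosh w) ^ n * exp (-exp x * cosh w) * cos (u * w)

section BesselMoment

variable (n : ℕ) (u : ℝ)

lemma besselMoment_zero (x : ℝ) : besselMoment 0 u x = besselF u x := by
  simp only [besselMoment, besselF, pow_zero, one_mul]

lemma abs_besselMoment_integrand_le {x x' : ℝ} (hx : |x' - x| ≤ 1) (w : ℝ) :
    |(exp x' * cosh w) ^ n * exp (-exp x' * cosh w) * cos (u * w)| ≤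
      exp (x + 1) ^ n * (cosh w ^ n * exp (-(exp (x - 1) * cosh w))) := by
  obtain ⟨hlo, hhi⟩ := abs_le.1 hx
  have hc := cosh_pos w
  rw [abs_mul, abs_mul, abs_exp, abs_pow, abs_of_pos (by positivity : 0 < exp x' * cosh w)]
  calc (exp x' * cosh w) ^ n * exp (-exp x' * cosh w) * |cos (u * w)|
      ≤ (exp (x + 1) * cosh w) ^ n * exp (-(exp (x - 1) * cosh w)) * 1 := by
        rw [neg_mul]
        gcongr
        · linarith
        · linarith
        · exact abs_cos_le_one _
    _ = _ := by ring

lemma integrableOn_besselMoment_bound (x : ℝ) :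
    IntegrableOn (fun w => exp (x + 1) ^ n * (cosh w ^ n * exp (-(exp (x - 1) * cosh w))))
      (Ioi 0) :=
  (integrableOn_cosh_pow_mul_exp_neg_mul_cosh n (exp_pos (x - 1))).const_mul _

lemma integrableOn_besselMoment_integrand (x : ℝ) :
    IntegrableOn (fun w => (exp x * cosh w) ^ n * exp (-exp x * cosh w) * cos (u * w))
      (Ioi 0) :=
  (integrableOn_besselMoment_bound n x).mono' (by fun_prop : Continuous _).aestronglyMeasurable
    (Eventually.of_forall fun w =>
      (norm_eq_abs _).trans_le (abs_besselMoment_integrand_le n u (by simp) w))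

@[fun_prop]
lemma continuous_besselMoment (x : ℝ) : Continuous fun u => besselMoment n u x :=
  continuous_of_dominated (fun _ => (by fun_prop : Continuous _).aestronglyMeasurable)
    (fun u => Eventually.of_forall fun w =>
      (norm_eq_abs _).trans_le (abs_besselMoment_integrand_le n u (by simp) w))
    (integrableOn_besselMoment_bound n x) (Eventually.of_forall fun _ => by fun_prop)

lemma exists_abs_besselMoment_le (x : ℝ) :
    ∃ C, ∀ u x', |x' - x| ≤ 1 → |besselMoment n u x'| ≤ C :=
  ⟨_, fun u _ hx => norm_integral_le_of_norm_le (integrableOn_besselMoment_bound n x)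
    (Eventually.of_forall fun w =>
      (norm_eq_abs _).trans_le (abs_besselMoment_integrand_le n u hx w))⟩

lemma hasDerivAt_besselMoment_integrand (w x : ℝ) :
    HasDerivAt (fun x => (exp x * cosh w) ^ n * exp (-exp x * cosh w) * cos (u * w))
      (n * ((exp x * cosh w) ^ n * exp (-exp x * cosh w) * cos (u * w)) -
        (exp x * cosh w) ^ (n + 1) * exp (-exp x * cosh w) * cos (u * w)) x := by
  have hs : HasDerivAt (fun x => exp x * cosh w) (exp x * cosh w) x :=
    (hasDerivAt_exp x).mul_const _
  have hpow : HasDerivAt (fun x => (exp x * cosh w) ^ n) (n * (exp x * cosh w) ^ n) x := by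
    refine (hs.fun_pow n).congr_deriv ?_
    cases n with
    | zero => simp
    | succ k => rw [Nat.add_sub_cancel, pow_succ]; ring
  have hexp : HasDerivAt (fun x => exp (-exp x * cosh w))
      (exp (-exp x * cosh w) * (-exp x * cosh w)) x :=
    ((hasDerivAt_exp x).neg.mul_const (cosh w)).exp
  refine ((hpow.mul hexp).mul_const (cos (u * w))).congr_deriv ?_
  ring

lemma hasDerivAt_besselMoment (x : ℝ) :
    HasDerivAt (besselMoment n u) (n * besselMoment n u x - besselMoment (n + 1) u x) x := by
  have hint := integrableOn_besselMoment_integrand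
  have hF' : ∫ w in Ioi 0,
      (n * ((exp x * cosh w) ^ n * exp (-exp x * cosh w) * cos (u * w)) -
        (exp x * cosh w) ^ (n + 1) * exp (-exp x * cosh w) * cos (u * w)) =
      n * besselMoment n u x - besselMoment (n + 1) u x := by
    rw [integral_sub ((hint n u x).const_mul _) (hint (n + 1) u x), integral_const_mul]
    rfl
  rw [← hF']
  refine (hasDerivAt_integral_of_dominated_loc_of_deriv_le (Metric.closedBall_mem_nhds x one_pos)
    (bound := fun w => n * (exp (x + 1) ^ n * (cosh w ^ n * exp (-(exp (x - 1) * cosh w)))) +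
      exp (x + 1) ^ (n + 1) * (cosh w ^ (n + 1) * exp (-(exp (x - 1) * cosh w))))
    (Eventually.of_forall fun x' => (hint n u x').aestronglyMeasurable) (hint n u x)
    (by fun_prop : Continuous _).aestronglyMeasurable ?_
    (((integrableOn_besselMoment_bound n x).const_mul _).add
      (integrableOn_besselMoment_bound (n + 1) x))
    (Eventually.of_forall fun w x' _ => hasDerivAt_besselMoment_integrand n u w x')).2
  refine Eventually.of_forall fun w x' hx' => ?_
  rw [Metric.mem_closedBall, dist_eq] at hx'
  rw [norm_eq_abs]
  refine (abs_sub _ _).trans (add_le_add ?_ (abs_besselMoment_integrand_le (n + 1) u hx' w))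
  rw [abs_mul, Nat.abs_cast]
  exact mul_le_mul_of_nonneg_left (abs_besselMoment_integrand_le n u hx' w) n.cast_nonneg

end BesselMoment

noncomputable def besselBoundaryTerm (r u w : ℝ) : ℝ :=
  u * exp (-r * cosh w) * sin (u * w) - r * sinh w * exp (-r * cosh w) * cos (u * w)

lemma hasDerivAt_besselBoundaryTerm (r u w : ℝ) :
    HasDerivAt (besselBoundaryTerm r u)
      (((r * cosh w) ^ 2 - r * cosh w + (u ^ 2 - r ^ 2)) * exp (-r * cosh w) * cos (u * w)) w := by
  have he : HasDerivAt (fun w => exp (-r * cosh w)) (exp (-r * cosh w) * (-r * sinh w)) w :=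
    ((hasDerivAt_cosh w).const_mul (-r)).exp
  have hlin : HasDerivAt (fun w => u * w) u w := by simpa using (hasDerivAt_id w).const_mul u
  have hsin := (hasDerivAt_sin (u * w)).comp w hlin
  have hcos := (hasDerivAt_cos (u * w)).comp w hlin
  refine (((he.const_mul u).mul hsin).sub
    ((((hasDerivAt_sinh w).const_mul r).mul he).mul hcos)).congr_deriv ?_
  simp only [Function.comp_apply, Pi.mul_apply]
  linear_combination (r ^ 2 * exp (-r * cosh w) * cos (u * w)) * sinh_sq w

lemma abs_besselBoundaryTerm_le {r : ℝ} (hr : 0 ≤ r) (u w : ℝ) :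
    |besselBoundaryTerm r u w| ≤
      |u| * exp (-(r * cosh w)) + r * cosh w * exp (-(r * cosh w)) := by
  have hsinh : |sinh w| ≤ cosh w := by
    rw [abs_sinh, ← cosh_abs w]
    exact (sinh_lt_cosh _).le
  rw [besselBoundaryTerm, neg_mul]
  refine (abs_sub _ _).trans (add_le_add ?_ ?_)
  · rw [abs_mul, abs_mul, abs_exp]
    exact mul_le_of_le_one_right (by positivity) (abs_sin_le_one _)
  · rw [abs_mul, abs_mul, abs_mul, abs_exp, abs_of_nonneg hr]
    calc r * |sinh w| * exp (-(r * cosh w)) * |cos (u * w)|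
        ≤ r * cosh w * exp (-(r * cosh w)) * 1 := by
          gcongr
          exact abs_cos_le_one _
      _ = _ := mul_one _

lemma tendsto_mul_cosh_atTop {r : ℝ} (hr : 0 < r) : Tendsto (fun w => r * cosh w) atTop atTop :=
  (tendsto_atTop_mono' _ ((eventually_ge_atTop 0).mono fun w hw =>
    (self_le_sinh_iff.2 hw).trans (sinh_lt_cosh w).le) tendsto_id).const_mul_atTop hr

lemma tendsto_besselBoundaryTerm_atTop {r : ℝ} (hr : 0 < r) (u : ℝ) :
    Tendsto (besselBoundaryTerm r u) atTop (𝓝 0) := by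
  have hdecay : Tendsto (fun s => |u| * exp (-s) + s * exp (-s)) atTop (𝓝 0) := by
    simpa using (tendsto_exp_neg_atTop_nhds_zero.const_mul |u|).add
      (tendsto_pow_mul_exp_neg_atTop_nhds_zero 1)
  exact squeeze_zero_norm (fun w => (norm_eq_abs _).trans_le (abs_besselBoundaryTerm_le hr.le u w))
    (hdecay.comp (tendsto_mul_cosh_atTop hr))

lemma besselMoment_two_sub_one (u x : ℝ) :
    besselMoment 2 u x - besselMoment 1 u x = (exp x ^ 2 - u ^ 2) * besselMoment 0 u x := by
  let I : ℕ → ℝ → ℝ := fun n w =>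
    (exp x * cosh w) ^ n * exp (-exp x * cosh w) * cos (u * w)
  have hI (n : ℕ) : IntegrableOn (I n) (Ioi 0) := integrableOn_besselMoment_integrand n u x
  have h21 : IntegrableOn (fun w => I 2 w - I 1 w) (Ioi 0) := (hI 2).sub (hI 1)
  have h0 : IntegrableOn (fun w => (u ^ 2 - exp x ^ 2) * I 0 w) (Ioi 0) := (hI 0).const_mul _
  have hFTC := integral_Ioi_of_hasDerivAt_of_tendsto'
    (f' := fun w => I 2 w - I 1 w + (u ^ 2 - exp x ^ 2) * I 0 w) (fun w _ =>
    (hasDerivAt_besselBoundaryTerm (exp x) u w).congr_deriv (by simp only [I]; ring))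
    (h21.add h0) (tendsto_besselBoundaryTerm_atTop (exp_pos x) u)
  rw [integral_add h21 h0, integral_sub (hI 2) (hI 1), integral_const_mul] at hFTC
  have hH0 : besselBoundaryTerm (exp x) u 0 = 0 := by simp [besselBoundaryTerm]
  rw [hH0, sub_zero] at hFTC
  change besselMoment 2 u x - besselMoment 1 u x + (u ^ 2 - exp x ^ 2) * besselMoment 0 u x = 0
    at hFTC
  linear_combination hFTC

section GaussianDamping

variable {g : ℝ → ℝ} {C K : ℝ}

lemma norm_exp_neg_mul_sq_mul_le (t : ℝ) {u a : ℝ} (ha : |a| ≤ C * exp (K * |u|)) :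
    ‖exp (-t * u ^ 2) * a‖ ≤ C * (exp (K * |u|) * exp (-t * u ^ 2)) := by
  rw [norm_mul, norm_of_nonneg (exp_pos _).le, norm_eq_abs, mul_comm, ← mul_assoc]
  exact mul_le_mul_of_nonneg_right ha (exp_pos _).le

lemma integrable_exp_neg_mul_sq_mul {t : ℝ} (ht : 0 < t) (hg : AEStronglyMeasurable g)
    (hgC : ∀ u, |g u| ≤ C * exp (K * |u|)) :
    Integrable fun u => exp (-t * u ^ 2) * g u :=
  ((integrable_exp_mul_abs_mul_exp_neg_mul_sq ht K).const_mul C).mono'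
    ((by fun_prop : Continuous fun u : ℝ => exp (-t * u ^ 2)).aestronglyMeasurable.mul hg)
    (Eventually.of_forall fun u => norm_exp_neg_mul_sq_mul_le t (hgC u))

lemma hasDerivAt_integral_exp_neg_mul_sq_mul (S : Set ℝ) {t : ℝ} (ht : 0 < t)
    (hg : Continuous g) (hgC : ∀ u, |g u| ≤ C * exp (K * |u|)) :
    HasDerivAt (fun s => ∫ u in S, exp (-s * u ^ 2) * g u)
      (∫ u in S, -u ^ 2 * exp (-t * u ^ 2) * g u) t := by
  have hC : 0 ≤ C := by nlinarith [abs_nonneg (g 0), hgC 0, exp_pos (K * |0|)]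
  refine (hasDerivAt_integral_of_dominated_loc_of_deriv_le (Metric.ball_mem_nhds t (half_pos ht))
    (μ := volume.restrict S) (F := fun s u => exp (-s * u ^ 2) * g u)
    (F' := fun s u => -u ^ 2 * exp (-s * u ^ 2) * g u)
    (bound := fun u => 2 * C * (exp ((K + 1) * |u|) * exp (-(t / 2) * u ^ 2)))
    ((lt_mem_nhds ht).mono fun s hs => (integrable_exp_neg_mul_sq_mul hs
      hg.aestronglyMeasurable hgC).integrableOn.aestronglyMeasurable)
    (integrable_exp_neg_mul_sq_mul ht hg.aestronglyMeasurable hgC).integrableOn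
    (by fun_prop : Continuous fun u => -u ^ 2 * exp (-t * u ^ 2) * g u).aestronglyMeasurable ?_
    ((integrable_exp_mul_abs_mul_exp_neg_mul_sq (half_pos ht) (K + 1)).integrableOn.const_mul _)
    (Eventually.of_forall fun u s _ => ?_)).2
  · refine Eventually.of_forall fun u s hs => ?_
    rw [Metric.mem_ball, dist_eq, abs_lt] at hs
    have hsq : u ^ 2 ≤ 2 * exp |u| := by
      have := pow_div_factorial_le_exp |u| (abs_nonneg u) 2
      rw [sq_abs] at this
      norm_num [Nat.factorial] at this
      linarith
    have hdecay : exp (-s * u ^ 2) ≤ exp (-(t / 2) * u ^ 2) :=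
      exp_le_exp.2 (by nlinarith [sq_nonneg u])
    rw [norm_eq_abs, abs_mul, abs_mul, abs_neg, abs_exp, abs_of_nonneg (sq_nonneg u)]
    calc u ^ 2 * exp (-s * u ^ 2) * |g u|
        ≤ (2 * exp |u|) * exp (-(t / 2) * u ^ 2) * (C * exp (K * |u|)) := by
          gcongr
          exact hgC u
      _ = _ := by rw [add_mul, one_mul, exp_add]; ring
  · have he := ((hasDerivAt_neg s).mul_const (u ^ 2)).exp
    exact (he.mul_const (g u)).congr_deriv (by ring)

end GaussianDamping

noncomputable def spectralMoment (b : ℝ → ℝ) (n : ℕ) (t x : ℝ) : ℝ :=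
  ∫ u in Ioi 0, exp (-t * u ^ 2) * (besselMoment n u x * b u)

section SpectralMoment

variable {b : ℝ → ℝ} {C K : ℝ}

lemma exists_abs_besselMoment_mul_le (hbC : ∀ u, |b u| ≤ C * exp (K * |u|)) (n : ℕ)
    (x : ℝ) :
    ∃ C', ∀ u x', |x' - x| ≤ 1 → |besselMoment n u x' * b u| ≤ C' * exp (K * |u|) := by
  obtain ⟨C₀, hC₀⟩ := exists_abs_besselMoment_le n x
  refine ⟨C₀ * C, fun u x' hx => ?_⟩
  rw [abs_mul, mul_assoc]
  exact mul_le_mul (hC₀ u x' hx) (hbC u) (abs_nonneg _) ((abs_nonneg _).trans (hC₀ u x' hx))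

lemma exists_abs_deriv_besselMoment_mul_le (hbC : ∀ u, |b u| ≤ C * exp (K * |u|)) (n : ℕ)
    (x : ℝ) : ∃ C', ∀ u x', |x' - x| ≤ 1 →
      |(n * besselMoment n u x' - besselMoment (n + 1) u x') * b u| ≤ C' * exp (K * |u|) := by
  obtain ⟨C₁, hC₁⟩ := exists_abs_besselMoment_mul_le hbC n x
  obtain ⟨C₂, hC₂⟩ := exists_abs_besselMoment_mul_le hbC (n + 1) x
  refine ⟨n * C₁ + C₂, fun u x' hx => ?_⟩
  rw [sub_mul, mul_assoc, add_mul, mul_assoc]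
  refine (abs_sub _ _).trans (add_le_add ?_ (hC₂ u x' hx))
  rw [abs_mul, Nat.abs_cast]
  exact mul_le_mul_of_nonneg_left (hC₁ u x' hx) n.cast_nonneg

lemma integrable_spectralMoment_integrand (hb : Continuous b)
    (hbC : ∀ u, |b u| ≤ C * exp (K * |u|)) (n : ℕ) {t : ℝ} (ht : 0 < t) (x : ℝ) :
    Integrable fun u => exp (-t * u ^ 2) * (besselMoment n u x * b u) := by
  obtain ⟨C', hC'⟩ := exists_abs_besselMoment_mul_le hbC n x
  exact integrable_exp_neg_mul_sq_mul ht
    (by fun_prop : Continuous fun u => besselMoment n u x * b u).aestronglyMeasurable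
    fun u => hC' u x (by simp)

lemma hasDerivAt_spectralMoment (hb : Continuous b) (hbC : ∀ u, |b u| ≤ C * exp (K * |u|))
    (n : ℕ) {t : ℝ} (ht : 0 < t) (x : ℝ) :
    HasDerivAt (spectralMoment b n t)
      (n * spectralMoment b n t x - spectralMoment b (n + 1) t x) x := by
  have hint (m : ℕ) :=
    (integrable_spectralMoment_integrand hb hbC m ht x).integrableOn (s := Ioi 0)
  have hF' : ∫ u in Ioi 0, exp (-t * u ^ 2) *
      ((n * besselMoment n u x - besselMoment (n + 1) u x) * b u) =
      n * spectralMoment b n t x - spectralMoment b (n + 1) t x := by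
    rw [spectralMoment, spectralMoment, ← integral_const_mul,
      ← integral_sub ((hint n).const_mul _) (hint (n + 1))]
    congr 1 with u
    ring
  obtain ⟨C', hC'⟩ := exists_abs_deriv_besselMoment_mul_le hbC n x
  rw [← hF']
  refine (hasDerivAt_integral_of_dominated_loc_of_deriv_le (Metric.closedBall_mem_nhds x one_pos)
    (F' := fun x' u => exp (-t * u ^ 2) *
      ((n * besselMoment n u x' - besselMoment (n + 1) u x') * b u))
    (bound := fun u => C' * (exp (K * |u|) * exp (-t * u ^ 2)))
    (Eventually.of_forall fun x' =>
      (integrable_spectralMoment_integrand hb hbC n ht x').integrableOn.aestronglyMeasurable)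
    (hint n) (Continuous.aestronglyMeasurable (by fun_prop))
    (Eventually.of_forall fun u x' hx' => norm_exp_neg_mul_sq_mul_le t
      (hC' u x' (by rwa [Metric.mem_closedBall, dist_eq] at hx')))
    ((integrable_exp_mul_abs_mul_exp_neg_mul_sq ht K).integrableOn.const_mul _)
    (Eventually.of_forall fun u x' _ =>
      ((hasDerivAt_besselMoment n u x').mul_const (b u)).const_mul _)).2

lemma spectralMoment_two_sub_one (hb : Continuous b) (hbC : ∀ u, |b u| ≤ C * exp (K * |u|))
    {t : ℝ} (ht : 0 < t) (x : ℝ) :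
    spectralMoment b 2 t x - spectralMoment b 1 t x =
      exp (2 * x) * spectralMoment b 0 t x +
        ∫ u in Ioi 0, -u ^ 2 * exp (-t * u ^ 2) * (besselMoment 0 u x * b u) := by
  have hint (m : ℕ) :=
    (integrable_spectralMoment_integrand hb hbC m ht x).integrableOn (s := Ioi 0)
  have hode : ∫ u in Ioi 0, -u ^ 2 * exp (-t * u ^ 2) * (besselMoment 0 u x * b u) =
      ∫ u in Ioi 0, (exp (-t * u ^ 2) * (besselMoment 2 u x * b u) -
        exp (-t * u ^ 2) * (besselMoment 1 u x * b u) -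
          exp (2 * x) * (exp (-t * u ^ 2) * (besselMoment 0 u x * b u))) := by
    congr 1 with u
    have hexp : exp (2 * x) = exp x ^ 2 := by rw [← exp_nat_mul]; norm_num
    rw [hexp]
    linear_combination (-(exp (-t * u ^ 2) * b u)) * besselMoment_two_sub_one u x
  have h21 : IntegrableOn (fun u => exp (-t * u ^ 2) * (besselMoment 2 u x * b u) -
      exp (-t * u ^ 2) * (besselMoment 1 u x * b u)) (Ioi 0) := (hint 2).sub (hint 1)
  rw [hode, integral_sub h21 ((hint 0).const_mul _), integral_sub (hint 2) (hint 1),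
    integral_const_mul]
  simp only [spectralMoment]
  ring

lemma hasDerivAt_time_spectralMoment_zero (hb : Continuous b)
    (hbC : ∀ u, |b u| ≤ C * exp (K * |u|)) {t : ℝ} (ht : 0 < t) (x : ℝ) :
    HasDerivAt (fun s => spectralMoment b 0 s x)
      (spectralMoment b 2 t x - spectralMoment b 1 t x -
        exp (2 * x) * spectralMoment b 0 t x) t := by
  rw [spectralMoment_two_sub_one hb hbC ht x, add_sub_cancel_left]
  obtain ⟨C', hC'⟩ := exists_abs_besselMoment_mul_le hbC 0 x
  exact hasDerivAt_integral_exp_neg_mul_sq_mul (Ioi 0) ht ((continuous_besselMoment 0 x).mul hb)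
    fun u => hC' u x (by simp)

lemma deriv_spectralMoment_zero (hb : Continuous b) (hbC : ∀ u, |b u| ≤ C * exp (K * |u|))
    {t : ℝ} (ht : 0 < t) : deriv (spectralMoment b 0 t) = fun x => -spectralMoment b 1 t x :=
  funext fun x => by simpa using (hasDerivAt_spectralMoment hb hbC 0 ht x).deriv

lemma hasDerivAt_deriv_spectralMoment_zero (hb : Continuous b)
    (hbC : ∀ u, |b u| ≤ C * exp (K * |u|)) {t : ℝ} (ht : 0 < t) (x : ℝ) :
    HasDerivAt (deriv (spectralMoment b 0 t))
      (spectralMoment b 2 t x - spectralMoment b 1 t x) x := by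
  rw [deriv_spectralMoment_zero hb hbC ht]
  simpa using (hasDerivAt_spectralMoment hb hbC 1 ht x).fun_neg

end SpectralMoment

lemma norm_Gamma_mul_I_sq {u : ℝ} (hu : u ≠ 0) :
    ‖Complex.Gamma (u * Complex.I)‖ ^ 2 = π / (u * sinh (π * u)) := by
  set z : ℂ := u * Complex.I
  have hz : z ≠ 0 := mul_ne_zero (Complex.ofReal_ne_zero.2 hu) Complex.I_ne_zero
  have hsinh : sinh (π * u) ≠ 0 := sinh_ne_zero.2 (mul_ne_zero pi_ne_zero hu)
  -- Reflection formula, with `Γ(1 - z) = -z Γ(-z)` and `Γ(-z) = conj Γ(z)` for imaginary `z`.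
  have hrefl := Complex.Gamma_mul_Gamma_one_sub z
  rw [show 1 - z = -z + 1 by ring, Complex.Gamma_add_one _ (neg_ne_zero.2 hz),
    show -z = (starRingEnd ℂ) z by simp [z, Complex.conj_ofReal], Complex.Gamma_conj,
    show (π : ℂ) * z = ((π * u : ℝ) : ℂ) * Complex.I by push_cast [z]; ring,
    Complex.sin_mul_I, ← Complex.ofReal_sinh] at hrefl
  have hconj : starRingEnd ℂ z = -(u * Complex.I) := by simp [z, Complex.conj_ofReal]
  rw [mul_left_comm, Complex.mul_conj, hconj,
    eq_div_iff (mul_ne_zero (Complex.ofReal_ne_zero.2 hsinh) Complex.I_ne_zero)] at hrefl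
  have hreal :
      (Complex.normSq (Complex.Gamma z) : ℂ) * ((u : ℂ) * (sinh (π * u) : ℂ)) = π := by
    linear_combination hrefl +
      ((u : ℂ) * Complex.normSq (Complex.Gamma z) * (sinh (π * u) : ℂ)) * Complex.I_sq
  rw [Complex.sq_norm, eq_div_iff (mul_ne_zero hu hsinh)]
  exact_mod_cast hreal

noncomputable def spectralDensity (u : ℝ) : ℝ := 2 * u * sinh (π * u) / π ^ 2

lemma two_div_pi_mul_norm_Gamma_sq {u : ℝ} (hu : u ≠ 0) :
    2 / (π * ‖Complex.Gamma (u * Complex.I)‖ ^ 2) = spectralDensity u := by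
  have hsinh : sinh (π * u) ≠ 0 := sinh_ne_zero.2 (mul_ne_zero pi_ne_zero hu)
  rw [norm_Gamma_mul_I_sq hu, spectralDensity]
  field_simp

lemma continuous_spectralDensity : Continuous spectralDensity := by
  unfold spectralDensity
  fun_prop

lemma abs_spectralDensity_le (u : ℝ) :
    |spectralDensity u| ≤ 2 / π ^ 2 * exp ((π + 1) * |u|) := by
  have hu : |u| ≤ exp |u| := (le_add_of_nonneg_right zero_le_one).trans (add_one_le_exp _)
  have hsinh : |sinh (π * u)| ≤ exp (π * |u|) := by
    rw [abs_sinh, abs_mul, abs_of_pos pi_pos, sinh_eq]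
    linarith [exp_pos (π * |u|), exp_pos (-(π * |u|))]
  rw [spectralDensity, abs_div, abs_mul, abs_mul, abs_two, abs_of_pos (by positivity : 0 < π ^ 2),
    add_mul, one_mul, exp_add]
  calc 2 * |u| * |sinh (π * u)| / π ^ 2 ≤ 2 * exp |u| * exp (π * |u|) / π ^ 2 := by gcongr
    _ = _ := by ring

lemma continuous_besselF (y : ℝ) : Continuous fun u => besselF u y := by
  simpa only [besselMoment_zero] using continuous_besselMoment 0 y

lemma abs_besselF_le (u y : ℝ) : |besselF u y| ≤ besselF 0 y := by
  have hint := integrableOn_besselMoment_integrand 0 0 y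
  simp only [pow_zero, one_mul, zero_mul, cos_zero, mul_one] at hint
  rw [besselF, besselF]
  simp only [zero_mul, cos_zero, mul_one]
  rw [← norm_eq_abs]
  refine norm_integral_le_of_norm_le hint (Eventually.of_forall fun w => ?_)
  rw [norm_mul, norm_of_nonneg (exp_pos _).le, norm_eq_abs]
  exact mul_le_of_le_one_right (exp_pos _).le (abs_cos_le_one _)

lemma abs_besselF_mul_spectralDensity_le (y u : ℝ) :
    |besselF u y * spectralDensity u| ≤ besselF 0 y * (2 / π ^ 2) * exp ((π + 1) * |u|) := by
  rw [abs_mul, mul_assoc]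
  exact mul_le_mul (abs_besselF_le u y) (abs_spectralDensity_le u) (abs_nonneg _)
    ((abs_nonneg _).trans (abs_besselF_le u y))

lemma heatKerIntegrand_eq (t x y : ℝ) {u : ℝ} (hu : u ≠ 0) :
    heatKerIntegrand t x y u =
      exp (-t * u ^ 2) * (besselMoment 0 u x * (besselF u y * spectralDensity u)) := by
  rw [heatKerIntegrand, two_div_pi_mul_norm_Gamma_sq hu, besselMoment_zero]
  ring

lemma heatKer_eq_spectralMoment (t x y : ℝ) :
    heatKer t x y = spectralMoment (fun u => besselF u y * spectralDensity u) 0 t x :=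
  setIntegral_congr_fun measurableSet_Ioi fun _ hu => heatKerIntegrand_eq t x y (ne_of_gt hu)

/-- The integral defining `p(t;x,y)` converges, `p` is differentiable in `t` and
twice differentiable in `x`, and it satisfies the heat equation
`∂_t p = ∂_{xx} p - e^{2x} p` for `t > 0`. -/
theorem heatKer_pde :
    (∀ t > (0 : ℝ), ∀ x y : ℝ,
        IntegrableOn (heatKerIntegrand t x y) (Set.Ioi (0 : ℝ))) ∧
    (∀ t > (0 : ℝ), ∀ x y : ℝ, DifferentiableAt ℝ (fun s => heatKer s x y) t) ∧
    (∀ t > (0 : ℝ), ∀ x y : ℝ,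
        Differentiable ℝ (fun x' => heatKer t x' y) ∧
        Differentiable ℝ (deriv (fun x' => heatKer t x' y))) ∧
    (∀ t > (0 : ℝ), ∀ x y : ℝ,
        deriv (fun s => heatKer s x y) t =
          deriv (deriv (fun x' => heatKer t x' y)) x - Real.exp (2 * x) * heatKer t x y) := by
  have hb (y : ℝ) : Continuous fun u => besselF u y * spectralDensity u :=
    (continuous_besselF y).mul continuous_spectralDensity
  have hbC (y : ℝ) := abs_besselF_mul_spectralDensity_le y
  have hp_x (t y : ℝ) : (fun x => heatKer t x y) =
      spectralMoment (fun u => besselF u y * spectralDensity u) 0 t :=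
    funext fun x => heatKer_eq_spectralMoment t x y
  have hp_t (x y : ℝ) : (fun t => heatKer t x y) =
      fun t => spectralMoment (fun u => besselF u y * spectralDensity u) 0 t x :=
    funext fun t => heatKer_eq_spectralMoment t x y
  refine ⟨fun t ht x y => ?_, fun t ht x y => ?_, fun t ht x y => ⟨?_, ?_⟩,
    fun t ht x y => ?_⟩
  · exact (integrable_spectralMoment_integrand (hb y) (hbC y) 0 ht x).integrableOn.congr_fun
      (fun u hu => (heatKerIntegrand_eq t x y (ne_of_gt hu)).symm) measurableSet_Ioi
  · rw [hp_t x y]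
    exact (hasDerivAt_time_spectralMoment_zero (hb y) (hbC y) ht x).differentiableAt
  · rw [hp_x t y]
    exact fun x => (hasDerivAt_spectralMoment (hb y) (hbC y) 0 ht x).differentiableAt
  · rw [hp_x t y]
    exact fun x => (hasDerivAt_deriv_spectralMoment_zero (hb y) (hbC y) ht x).differentiableAt
  · rw [hp_t x y, hp_x t y, (hasDerivAt_time_spectralMoment_zero (hb y) (hbC y) ht x).deriv,
      (hasDerivAt_deriv_spectralMoment_zero (hb y) (hbC y) ht x).deriv,
      heatKer_eq_spectralMoment]
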